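/- arXiv:2504.21098 — 2 statements merged into one kernel-verified Lean document; each statement's English description precedes it below -/
import Mathlib

section
/- Fix integers l ≥ 1 and 1 ≤ r ≤ l, a real c > 0, and set d := 2l - r. Fix t = (t_1, …, t_d) ∈ ℝ_{≥0}^d, put σ := Σ_{i=1}^d t_i, and for each N set κ_N := c√N and Σ_N := Σ_{i=1}^d ⌊t_i √N⌋. Then lim_{N→∞} N^{d/2} · κ_N^{r-1} (l + Σ_N + κ_N) / (N + κ_N)^{l + Σ_N} · ∏_{i=0}^{Σ_N - 1}(N - l - i) = c^{r-1} (σ + c) · exp(−σ²/2 − cσ), where an empty product equals 1. -/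
/-!
With `q = √N` and `Σ = Σ_N`, the scaled quantity equals
`c^(r-1) · (q² / (q² + cq))^l · (l + Σ + cq) / q · ∏_{j<Σ} (1 - x_j)`, where
`x_j = (l + j + cq) / (q² + cq)`. Since `Σ / q → σ`, the first factors tend to `1` and `σ + c`.
The `x_j` are uniformly `O(1/q)` and, by Gauss' summation, `∑ x_j → σ²/2 + cσ`; the bounds
`exp (-(x + 2x²)) ≤ 1 - x ≤ exp (-x)` then squeeze the product to `exp (-(σ²/2 + cσ))`.
-/

open Filter Finset Topology Real

lemma exp_neg_add_two_mul_sq_le_one_sub {x : ℝ} (hx : x ≤ 1 / 2) :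
    exp (-(x + 2 * x ^ 2)) ≤ 1 - x := by
  have hpos : 0 < 1 - x := by linarith
  have key : exp (-(x / (1 - x))) ≤ 1 - x := by
    rw [exp_neg, inv_le_comm₀ (exp_pos _) hpos]
    calc (1 - x)⁻¹ = x / (1 - x) + 1 := by field_simp; ring
      _ ≤ exp (x / (1 - x)) := add_one_le_exp _
  refine (exp_le_exp.2 (neg_le_neg ?_)).trans key
  rw [div_le_iff₀ hpos]
  nlinarith [sq_nonneg x]

theorem tendsto_prod_one_sub {α ι : Type*} {L : Filter α} {s : α → Finset ι}
    {x : α → ι → ℝ} {M : α → ℝ} {U : ℝ} (hM : Tendsto M L (𝓝 0))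
    (hx : ∀ᶠ a in L, ∀ i ∈ s a, 0 ≤ x a i ∧ x a i ≤ M a)
    (hsum : Tendsto (fun a => ∑ i ∈ s a, x a i) L (𝓝 U)) :
    Tendsto (fun a => ∏ i ∈ s a, (1 - x a i)) L (𝓝 (exp (-U))) := by
  have hlower : Tendsto (fun a => exp (-((1 + 2 * M a) * ∑ i ∈ s a, x a i))) L
      (𝓝 (exp (-U))) := by
    simpa using (((hM.const_mul 2).const_add 1).mul hsum).neg.rexp
  refine tendsto_of_tendsto_of_tendsto_of_le_of_le' hlower hsum.neg.rexp ?_ ?_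
  · filter_upwards [hx, hM.eventually (eventually_le_nhds (by norm_num : (0 : ℝ) < 1 / 2))]
      with a hxa hMa
    rw [mul_sum, ← sum_neg_distrib, exp_sum]
    refine prod_le_prod (fun _ _ => (exp_pos _).le) fun i hi => ?_
    obtain ⟨h0, hle⟩ := hxa i hi
    refine (exp_le_exp.2 ?_).trans (exp_neg_add_two_mul_sq_le_one_sub (hle.trans hMa))
    nlinarith
  · filter_upwards [hx, hM.eventually (eventually_le_nhds one_pos)] with a hxa hMa
    rw [← sum_neg_distrib, exp_sum]
    refine prod_le_prod (fun i hi => ?_) fun i _ => one_sub_le_exp_neg _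
    linarith [(hxa i hi).2]

lemma sum_range_add_natCast (m : ℕ) (a : ℝ) :
    ∑ j ∈ range m, (a + j) = m * a + m * (m - 1) / 2 := by
  induction m with
  | zero => simp
  | succ n ih => rw [sum_range_succ, ih]; push_cast; ring

/-- The probability, under the `κ`-biased spanning-forest measure on `K_N`, that the reduced
object spanning `l` marked vertices is a given bouquet of `r` trees with total edge length `s`. -/
noncomputable def bouquetProb (l r : ℕ) (κ N : ℝ) (s : ℕ) : ℝ :=
  κ ^ (r - 1) * ((l + s + κ) / (N + κ) ^ (l + s)) * ∏ j ∈ range s, (N - l - j)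

lemma pow_mul_bouquetProb_eq {l r : ℕ} (hr1 : 1 ≤ r) (hr : r ≤ 2 * l) {c q : ℝ} (hc : 0 ≤ c)
    (hq : 0 < q) (s : ℕ) :
    q ^ (2 * l - r) * bouquetProb l r (c * q) (q ^ 2) s =
      c ^ (r - 1) * (q ^ 2 / (q ^ 2 + c * q)) ^ l * ((l + s + c * q) / q) *
        ∏ j ∈ range s, (1 - (l + j + c * q) / (q ^ 2 + c * q)) := by
  have hD : 0 < q ^ 2 + c * q := by positivity
  have hfactor : ∏ j ∈ range s, (1 - (l + j + c * q) / (q ^ 2 + c * q)) =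
      (∏ j ∈ range s, (q ^ 2 - l - j)) / (q ^ 2 + c * q) ^ #(range s) := by
    rw [← prod_const, ← prod_div_distrib]
    exact prod_congr rfl fun j _ => by field_simp; ring
  have hpow : q ^ (2 * l - r) * q ^ (r - 1) * q = (q ^ 2) ^ l := by
    rw [← pow_add, ← pow_succ, ← pow_mul, show 2 * l - r + (r - 1) + 1 = 2 * l by omega]
  rw [hfactor, card_range, bouquetProb, pow_add, mul_pow, div_pow, ← hpow]
  field_simp

section FloorSum

variable {ι : Type*} [Fintype ι] {t : ι → ℝ} (l : ℕ) {c : ℝ}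

/-- `Σ_N = ∑ ⌊t_i √N⌋` as a function of `q = √N`. -/
noncomputable def floorSum (t : ι → ℝ) (q : ℝ) : ℕ := ∑ i, ⌊t i * q⌋₊

theorem tendsto_floorSum_div (ht : ∀ i, 0 ≤ t i) :
    Tendsto (fun q => (floorSum t q : ℝ) / q) atTop (𝓝 (∑ i, t i)) := by
  refine (tendsto_finsetSum univ fun i _ => tendsto_nat_floor_mul_div_atTop (ht i)).congr
    fun q => ?_
  simp [floorSum, sum_div]

theorem tendsto_sum_range_floorSum (ht : ∀ i, 0 ≤ t i) :
    Tendsto (fun q => ∑ j ∈ range (floorSum t q), (l + j + c * q) / (q ^ 2 + c * q)) atTop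
      (𝓝 ((∑ i, t i) ^ 2 / 2 + c * ∑ i, t i)) := by
  set S := ∑ i, t i
  have hu := tendsto_floorSum_div ht
  have he : Tendsto (fun q : ℝ => q⁻¹) atTop (𝓝 0) := tendsto_inv_atTop_zero
  have hw : Tendsto (fun q => (floorSum t q / q * (l * q⁻¹ + c) +
      floorSum t q / q * (floorSum t q / q - q⁻¹) / 2) / (1 + c * q⁻¹)) atTop
      (𝓝 ((S * (l * 0 + c) + S * (S - 0) / 2) / (1 + c * 0))) :=
    ((hu.mul ((he.const_mul _).add_const c)).add ((hu.mul (hu.sub he)).div_const 2)).div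
      (tendsto_const_nhds.add (he.const_mul c)) (by simp)
  rw [show (S * (l * 0 + c) + S * (S - 0) / 2) / (1 + c * 0) = S ^ 2 / 2 + c * S by ring] at hw
  refine hw.congr' ?_
  filter_upwards [eventually_gt_atTop 0] with q hq
  rw [← sum_div, sum_congr rfl fun j _ => add_right_comm _ _ _, sum_range_add_natCast]
  field_simp

theorem tendsto_prod_range_floorSum (hc : 0 ≤ c) (ht : ∀ i, 0 ≤ t i) :
    Tendsto (fun q => ∏ j ∈ range (floorSum t q), (1 - (l + j + c * q) / (q ^ 2 + c * q)))
      atTop (𝓝 (exp (-((∑ i, t i) ^ 2 / 2 + c * ∑ i, t i)))) := by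
  have he : Tendsto (fun q : ℝ => q⁻¹) atTop (𝓝 0) := tendsto_inv_atTop_zero
  have hM : Tendsto (fun q => q⁻¹ * (l * q⁻¹ + floorSum t q / q + c)) atTop (𝓝 0) := by
    simpa using he.mul (((he.const_mul (l : ℝ)).add (tendsto_floorSum_div ht)).add_const c)
  refine tendsto_prod_one_sub hM ?_ (tendsto_sum_range_floorSum l ht)
  filter_upwards [eventually_gt_atTop 0] with q hq j hj
  have hj' : (j : ℝ) ≤ floorSum t q := by exact_mod_cast (mem_range.1 hj).le
  refine ⟨by positivity, ?_⟩
  calc (l + j + c * q) / (q ^ 2 + c * q) ≤ (l + floorSum t q + c * q) / q ^ 2 := by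
        gcongr
        exact le_add_of_nonneg_right (by positivity)
    _ = q⁻¹ * (l * q⁻¹ + floorSum t q / q + c) := by field_simp

theorem tendsto_pow_mul_bouquetProb {r : ℕ} (hr1 : 1 ≤ r) (hr : r ≤ 2 * l) (hc : 0 ≤ c)
    (ht : ∀ i, 0 ≤ t i) :
    Tendsto (fun q => q ^ (2 * l - r) * bouquetProb l r (c * q) (q ^ 2) (floorSum t q)) atTop
      (𝓝 (c ^ (r - 1) * ((∑ i, t i) + c) *
        exp (-(∑ i, t i) ^ 2 / 2 - c * ∑ i, t i))) := by
  have he : Tendsto (fun q : ℝ => q⁻¹) atTop (𝓝 0) := tendsto_inv_atTop_zero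
  have hratio : Tendsto (fun q => q ^ 2 / (q ^ 2 + c * q)) atTop (𝓝 1) := by
    have h := (tendsto_const_nhds.add (he.const_mul c)).inv₀ (by simp : (1 : ℝ) + c * 0 ≠ 0)
    rw [mul_zero, add_zero, inv_one] at h
    refine h.congr' ?_
    filter_upwards [eventually_gt_atTop 0] with q hq
    field_simp
  have hlead : Tendsto (fun q => (l + floorSum t q + c * q) / q) atTop (𝓝 ((∑ i, t i) + c)) := by
    have h := ((he.const_mul (l : ℝ)).add (tendsto_floorSum_div ht)).add_const c
    rw [mul_zero, zero_add] at h
    refine h.congr' ?_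
    filter_upwards [eventually_gt_atTop 0] with q hq
    field_simp
  have hlim := ((tendsto_const_nhds (x := c ^ (r - 1))).mul (hratio.pow l)).mul hlead |>.mul
    (tendsto_prod_range_floorSum l hc ht)
  rw [one_pow, mul_one, neg_add', ← neg_div] at hlim
  refine hlim.congr' ?_
  filter_upwards [eventually_gt_atTop 0] with q hq
  exact (pow_mul_bouquetProb_eq hr1 hr hc hq _).symm

end FloorSum

theorem stmt7_general (l r : ℕ) (hr1 : 1 ≤ r) (hrl : r ≤ l)
    (c : ℝ) (hc : 0 < c)
    (t : Fin (2 * l - r) → ℝ) (ht : ∀ i, 0 ≤ t i) :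
    Tendsto (fun N : ℕ =>
        Real.sqrt N ^ (2 * l - r) *
          ((c * Real.sqrt N) ^ (r - 1) *
            (((l : ℝ) + (∑ i, ⌊t i * Real.sqrt N⌋₊ : ℕ) + c * Real.sqrt N) /
              ((N : ℝ) + c * Real.sqrt N) ^ (l + ∑ i, ⌊t i * Real.sqrt N⌋₊)) *
            ∏ j ∈ Finset.range (∑ i, ⌊t i * Real.sqrt N⌋₊), ((N : ℝ) - l - j)))
      atTop
      (nhds (c ^ (r - 1) * ((∑ i, t i) + c) *
        Real.exp (-(∑ i, t i) ^ 2 / 2 - c * ∑ i, t i))) := by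
  have h := (tendsto_pow_mul_bouquetProb l hr1 (by omega) hc.le ht).comp
    (tendsto_sqrt_atTop.comp tendsto_natCast_atTop_atTop)
  refine h.congr fun N => ?_
  simp only [Function.comp_apply, bouquetProb, floorSum, sq_sqrt N.cast_nonneg]

theorem stmt7 (l r : ℕ) (hl : 1 ≤ l) (hr1 : 1 ≤ r) (hrl : r ≤ l)
    (c : ℝ) (hc : 0 < c)
    (t : Fin (2 * l - r) → ℝ) (ht : ∀ i, 0 ≤ t i) :
    Tendsto (fun N : ℕ =>
        Real.sqrt N ^ (2 * l - r) *
          ((c * Real.sqrt N) ^ (r - 1) *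
            (((l : ℝ) + (∑ i, ⌊t i * Real.sqrt N⌋₊ : ℕ) + c * Real.sqrt N) /
              ((N : ℝ) + c * Real.sqrt N) ^ (l + ∑ i, ⌊t i * Real.sqrt N⌋₊)) *
            ∏ j ∈ Finset.range (∑ i, ⌊t i * Real.sqrt N⌋₊), ((N : ℝ) - l - j)))
      atTop
      (nhds (c ^ (r - 1) * ((∑ i, t i) + c) *
        Real.exp (-(∑ i, t i) ^ 2 / 2 - c * ∑ i, t i))) :=
  stmt7_general l r hr1 hrl c hc t ht
end

section
/- For c > 0 and integers 1 ≤ r ≤ l define I_{l,r}(c) := (c^{r-1}/(2l-r-1)!) ∫_0^∞ (σ + c) σ^{2l-r-1} exp(−σ²/2 − cσ) dσ, and C_{l,r} := Σ_{π} ∏_{B ∈ π} c_{|B|}, the sum ranging over all set partitions π of {1, …, l} into exactly r blocks, where c_m := ∏_{i=1}^{m-1}(2i - 1). Then for every integer l ≥ 1 and every c > 0, Σ_{r=1}^{l} C_{l,r} · I_{l,r}(c) = 1. -/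
open Finset MeasureTheory

/-- `I l r c` : the limiting probability of a fixed bouquet configuration with
`r` binary trees spanning `l` marked vertices, in the critical regime `κ = c√N`. -/
noncomputable def I (l r : ℕ) (c : ℝ) : ℝ :=
  (c ^ (r - 1) / (Nat.factorial (2 * l - r - 1) : ℝ)) *
    ∫ σ in Set.Ioi (0 : ℝ),
      (σ + c) * σ ^ (2 * l - r - 1) * Real.exp (-σ ^ 2 / 2 - c * σ)

/-- `cShape m = ∏_{i=1}^{m-1} (2i-1)`: the number of binary tree shapes with
`m` labelled leaves (as a real number), with `cShape 1 = 1`. -/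
def cShape (m : ℕ) : ℝ := ∏ i ∈ Finset.range (m - 1), (2 * (i : ℝ) + 1)

/-- `C l r = Σ_π ∏_{B ∈ π} c_{|B|}`, summing over set partitions of `{1,…,l}`
into exactly `r` non-empty blocks. -/
noncomputable def C (l r : ℕ) : ℝ :=
  ∑ P ∈ (Finset.univ : Finset (Finpartition (Finset.univ : Finset (Fin l)))).filter
      (fun P => P.parts.card = r),
    ∏ B ∈ P.parts, cShape B.card

/-! Inserting a new element into a partition of an `n`-set either opens a singleton block or
joins a block `B`, which multiplies the weight `∏ c_{|B|}` by `2|B| - 1`. These factors add up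
to `2n - (r + 1)` over the `r + 1` blocks, so `C (n+1) (r+1) = C n r + (2n - r - 1) C n (r+1)`.

Since `(σ + c) e^{-σ²/2 - cσ}` is minus the derivative of `e^{-σ²/2 - cσ}`, integrating
by parts shows that `a n := (1/n!) ∫_0^∞ (σ + c) σ^n e^{-σ²/2 - cσ} dσ` satisfies `a 0 = 1` and
`a n = c a (n+1) + (n+1) a (n+2)`. As `I l r c = c^(r-1) a (2l - r - 1)`, the two recurrences make
`∑_r C l r * I l r c` independent of `l`, and for `l = 1` it is `a 0 = 1`. -/

lemma cShape_one : cShape 1 = 1 := by simp [cShape]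

lemma cShape_succ {m : ℕ} (hm : m ≠ 0) : cShape (m + 1) = (2 * m - 1) * cShape m := by
  obtain ⟨k, rfl⟩ := Nat.exists_eq_succ_of_ne_zero hm
  rw [cShape, cShape, Nat.add_sub_cancel, Nat.succ_sub_one, prod_range_succ]
  push_cast
  ring

namespace Finpartition

variable {α : Type*} [DecidableEq α] {a : α} {s t B : Finset α}

/-- `Q.insertElem a B` adds `a` to the block `B` of `Q`, where `B = ∅` opens the new block `{a}`.
It is only meaningful when `a ∉ t` and `B ∈ insert ∅ Q.parts`; otherwise it is the junk value
`indiscrete`. -/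
noncomputable def insertElem (Q : Finpartition t) (a : α) (B : Finset α) :
    Finpartition (insert a t) :=
  if h : a ∉ t ∧ B ∈ insert ∅ Q.parts then
    { parts := insert (insert a B) (Q.parts.erase B)
      supIndep := by
        rw [supIndep_iff_pairwiseDisjoint, coe_insert]
        refine (Q.disjoint.subset (by simp)).insert fun D hD _ => ?_
        rw [mem_coe, mem_erase] at hD
        refine disjoint_insert_left.2 ⟨fun haD => h.1 (Q.le hD.2 haD), ?_⟩
        rcases mem_insert.1 h.2 with rfl | hB
        · exact disjoint_empty_left _
        · exact Q.disjoint hB hD.2 (Ne.symm hD.1)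
      sup_parts := by
        have hBt : B ∪ (Q.parts.erase B).sup id = t := by
          rcases mem_insert.1 h.2 with rfl | hB
          · simpa [erase_eq_of_notMem Q.empty_notMem_parts] using Q.sup_parts
          · have h := Q.sup_parts
            rwa [← insert_erase hB, sup_insert] at h
        rw [sup_insert, id, insert_eq, sup_eq_union, union_assoc, hBt, ← insert_eq]
      bot_notMem := by
        rw [bot_eq_empty, mem_insert, not_or]
        exact ⟨(insert_ne_empty _ _).symm, fun h => Q.empty_notMem_parts (mem_of_mem_erase h)⟩ }
  else indiscrete (insert_ne_empty a t)

variable {Q : Finpartition t}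

lemma notMem_of_mem_insert_empty_parts (ha : a ∉ t) (hB : B ∈ insert ∅ Q.parts) : a ∉ B := by
  rcases mem_insert.1 hB with rfl | hB
  · exact notMem_empty a
  · exact fun haB => ha (Q.le hB haB)

lemma insert_notMem_erase_parts (ha : a ∉ t) (D : Finset α) : insert a B ∉ Q.parts.erase D :=
  fun h => ha (Q.le (mem_of_mem_erase h) (mem_insert_self a B))

lemma parts_insertElem (ha : a ∉ t) (hB : B ∈ insert ∅ Q.parts) :
    (Q.insertElem a B).parts = insert (insert a B) (Q.parts.erase B) := by
  rw [insertElem, dif_pos ⟨ha, hB⟩]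

lemma parts_insertElem_empty (ha : a ∉ t) :
    (Q.insertElem a ∅).parts = insert {a} Q.parts := by
  rw [parts_insertElem ha (mem_insert_self _ _), erase_eq_of_notMem Q.empty_notMem_parts]
  rfl

lemma part_insertElem (ha : a ∉ t) (hB : B ∈ insert ∅ Q.parts) :
    (Q.insertElem a B).part a = insert a B :=
  part_eq_of_mem _ (by rw [parts_insertElem ha hB]; exact mem_insert_self _ _) (mem_insert_self _ _)

noncomputable def eraseElem (P : Finpartition (insert a t)) (ha : a ∉ t) : Finpartition t :=
  ofErase (insert ((P.part a).erase a) (P.parts.erase (P.part a)))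
    (by
      have hpa : P.part a ∈ P.parts := P.part_mem.2 (mem_insert_self a t)
      rw [supIndep_iff_pairwiseDisjoint, coe_insert]
      refine (P.disjoint.subset (by simp)).insert fun D hD _ => ?_
      rw [mem_coe, mem_erase] at hD
      exact (P.disjoint hpa hD.2 (Ne.symm hD.1)).mono_left (erase_subset a _))
    (by
      have hpa : P.part a ∈ P.parts := P.part_mem.2 (mem_insert_self a t)
      have haX : a ∉ (P.parts.erase (P.part a)).sup id := fun h => by
        obtain ⟨D, hD, haD⟩ := mem_sup.1 h
        exact (mem_erase.1 hD).1 (P.eq_of_mem_parts (mem_of_mem_erase hD) hpa haD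
          (P.mem_part_self.2 (mem_insert_self a t)))
      have hsup := P.sup_parts
      rw [← insert_erase hpa, sup_insert, id, sup_eq_union] at hsup
      rw [sup_insert, id, sup_eq_union, ← erase_eq_of_notMem haX, ← erase_union_distrib, hsup,
        erase_insert ha])

lemma parts_eraseElem (P : Finpartition (insert a t)) (ha : a ∉ t) :
    (P.eraseElem ha).parts = (insert ((P.part a).erase a) (P.parts.erase (P.part a))).erase ∅ :=
  rfl

lemma erase_part_mem_insert_empty_parts (P : Finpartition (insert a t)) (ha : a ∉ t) :
    (P.part a).erase a ∈ insert ∅ (P.eraseElem ha).parts := by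
  by_cases h : (P.part a).erase a = ∅
  · exact h ▸ mem_insert_self _ _
  · exact mem_insert_of_mem (mem_erase.2 ⟨h, mem_insert_self _ _⟩)

lemma eraseElem_insertElem (ha : a ∉ t) (hB : B ∈ insert ∅ Q.parts) :
    (Q.insertElem a B).eraseElem ha = Q := by
  ext1
  rw [parts_eraseElem, part_insertElem ha hB,
    erase_insert (notMem_of_mem_insert_empty_parts ha hB), parts_insertElem ha hB,
    erase_insert (insert_notMem_erase_parts ha B)]
  rcases mem_insert.1 hB with rfl | hB
  · rw [erase_insert (by simp), erase_eq_of_notMem Q.empty_notMem_parts]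
  · rw [insert_erase hB, erase_eq_of_notMem Q.empty_notMem_parts]

lemma insertElem_eraseElem (P : Finpartition (insert a t)) (ha : a ∉ t) :
    (P.eraseElem ha).insertElem a ((P.part a).erase a) = P := by
  have hpa : P.part a ∈ P.parts := P.part_mem.2 (mem_insert_self a t)
  have hnew : (P.part a).erase a ∉ P.parts.erase (P.part a) := fun h => by
    obtain ⟨hne, hmem⟩ := mem_erase.1 h
    obtain ⟨x, hx⟩ := P.nonempty_of_mem_parts hmem
    exact hne (P.eq_of_mem_parts hmem hpa hx (erase_subset a _ hx))
  ext1
  rw [parts_insertElem ha (P.erase_part_mem_insert_empty_parts ha),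
    insert_erase (P.mem_part_self.2 (mem_insert_self a t)), parts_eraseElem, erase_right_comm,
    erase_insert hnew, erase_eq_of_notMem fun h => P.empty_notMem_parts (mem_of_mem_erase h),
    insert_erase hpa]

lemma sum_insertElem {M : Type*} [AddCommMonoid M] (ha : a ∉ t)
    (f : Finpartition (insert a t) → M) :
    ∑ Q : Finpartition t, ∑ B ∈ insert ∅ Q.parts, f (Q.insertElem a B) = ∑ P, f P := by
  rw [sum_sigma']
  exact sum_nbij' (fun p => p.1.insertElem a p.2)
    (fun P => ⟨P.eraseElem ha, (P.part a).erase a⟩) (fun _ _ => mem_univ _)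
    (fun P _ => mem_sigma.2 ⟨mem_univ _, P.erase_part_mem_insert_empty_parts ha⟩)
    (fun ⟨Q, B⟩ hB => by
      have hB : B ∈ insert ∅ Q.parts := (mem_sigma.1 hB).2
      dsimp only
      rw [eraseElem_insertElem ha hB, part_insertElem ha hB,
        erase_insert (notMem_of_mem_insert_empty_parts ha hB)])
    (fun P _ => P.insertElem_eraseElem ha) (fun _ _ => rfl)

noncomputable def shapeWeight (P : Finpartition s) : ℝ := ∏ B ∈ P.parts, cShape #B

lemma sum_two_mul_card_sub_one (P : Finpartition s) :
    ∑ B ∈ P.parts, (2 * #B - 1 : ℝ) = 2 * #s - #P.parts := by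
  rw [sum_sub_distrib, ← mul_sum, ← Nat.cast_sum, P.sum_card_parts, sum_const, nsmul_one]

lemma card_parts_insertElem_empty (ha : a ∉ t) : #(Q.insertElem a ∅).parts = #Q.parts + 1 := by
  rw [parts_insertElem_empty ha, card_insert_of_notMem]
  exact fun h => ha (Q.le h (mem_singleton_self a))

lemma card_parts_insertElem_of_mem (ha : a ∉ t) (hB : B ∈ Q.parts) :
    #(Q.insertElem a B).parts = #Q.parts := by
  rw [parts_insertElem ha (mem_insert_of_mem hB), card_insert_of_notMem
    (insert_notMem_erase_parts ha B), card_erase_add_one hB]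

lemma shapeWeight_insertElem_empty (ha : a ∉ t) :
    (Q.insertElem a ∅).shapeWeight = Q.shapeWeight := by
  rw [shapeWeight, parts_insertElem_empty ha, prod_insert
    fun h => ha (Q.le h (mem_singleton_self a)), card_singleton, cShape_one, one_mul, shapeWeight]

lemma shapeWeight_insertElem_of_mem (ha : a ∉ t) (hB : B ∈ Q.parts) :
    (Q.insertElem a B).shapeWeight = (2 * #B - 1) * Q.shapeWeight := by
  rw [shapeWeight, parts_insertElem ha (mem_insert_of_mem hB),
    prod_insert (insert_notMem_erase_parts ha B),
    card_insert_of_notMem (notMem_of_mem_insert_empty_parts ha (mem_insert_of_mem hB)),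
    cShape_succ (Q.nonempty_of_mem_parts hB).card_pos.ne', mul_assoc,
    mul_prod_erase _ (fun D => cShape #D) hB, shapeWeight]

end Finpartition

noncomputable def shapeStirling : ℕ → ℕ → ℝ
  | 0, 0 => 1
  | 0, _ + 1 => 0
  | _ + 1, 0 => 0
  | n + 1, r + 1 => shapeStirling n r + (2 * n - (r + 1)) * shapeStirling n (r + 1)

lemma shapeStirling_succ_succ (n r : ℕ) :
    shapeStirling (n + 1) (r + 1)
      = shapeStirling n r + (2 * n - (r + 1)) * shapeStirling n (r + 1) := rfl

lemma shapeStirling_eq_zero_of_lt {n r : ℕ} (h : n < r) : shapeStirling n r = 0 := by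
  induction n generalizing r with
  | zero => obtain ⟨r, rfl⟩ := Nat.exists_eq_succ_of_ne_zero (by omega : r ≠ 0); rfl
  | succ n ih =>
    obtain ⟨r, rfl⟩ := Nat.exists_eq_succ_of_ne_zero (by omega : r ≠ 0)
    rw [shapeStirling_succ_succ, ih (by omega), ih (by omega)]
    ring

open Finpartition

noncomputable def partitionWeight {α : Type*} [DecidableEq α] (s : Finset α) (r : ℕ) : ℝ :=
  ∑ P ∈ (univ : Finset (Finpartition s)).filter (fun P => #P.parts = r), P.shapeWeight

section partitionWeight

variable {α : Type*} [DecidableEq α] {a : α} {t : Finset α}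

lemma partitionWeight_insert_zero : partitionWeight (insert a t) 0 = 0 := by
  rw [partitionWeight, sum_filter]
  exact sum_eq_zero fun P _ =>
    if_neg fun h => insert_ne_empty a t (P.parts_eq_empty_iff.1 (card_eq_zero.1 h))

lemma partitionWeight_insert_succ (ha : a ∉ t) (r : ℕ) :
    partitionWeight (insert a t) (r + 1)
      = partitionWeight t r + (2 * #t - (r + 1)) * partitionWeight t (r + 1) := by
  rw [partitionWeight, sum_filter, ← sum_insertElem ha, partitionWeight, partitionWeight,
    sum_filter, sum_filter, mul_sum, ← sum_add_distrib]
  refine sum_congr rfl fun Q _ => ?_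
  rw [sum_insert (by simp), card_parts_insertElem_empty ha, shapeWeight_insertElem_empty ha]
  simp only [Nat.add_right_cancel_iff]
  congr 1
  by_cases hQ : #Q.parts = r + 1
  · have hcoef : (2 * #t - (r + 1) : ℝ) = ∑ B ∈ Q.parts, (2 * #B - 1 : ℝ) := by
      rw [sum_two_mul_card_sub_one, hQ, Nat.cast_succ]
    rw [if_pos hQ, hcoef, sum_mul]
    refine sum_congr rfl fun B hB => ?_
    rw [card_parts_insertElem_of_mem ha hB, if_pos hQ, shapeWeight_insertElem_of_mem ha hB]
  · rw [if_neg hQ, mul_zero]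
    exact sum_eq_zero fun B hB => by rw [card_parts_insertElem_of_mem ha hB, if_neg hQ]

lemma partitionWeight_empty (r : ℕ) : partitionWeight (∅ : Finset α) r = shapeStirling 0 r := by
  let _ : Unique (Finpartition (∅ : Finset α)) := inferInstanceAs (Unique (Finpartition ⊥))
  rw [partitionWeight, sum_filter, Fintype.sum_unique,
    (default : Finpartition (∅ : Finset α)).parts_eq_empty_iff.2 rfl]
  cases r <;> rfl

theorem partitionWeight_eq_shapeStirling (s : Finset α) (r : ℕ) :
    partitionWeight s r = shapeStirling #s r := by
  induction s using Finset.induction_on generalizing r with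
  | empty => exact partitionWeight_empty r
  | insert a t ha ih =>
    rw [card_insert_of_notMem ha]
    cases r with
    | zero => exact partitionWeight_insert_zero
    | succ r => rw [partitionWeight_insert_succ ha, ih, ih, shapeStirling_succ_succ]

end partitionWeight

lemma C_eq_shapeStirling (l r : ℕ) : C l r = shapeStirling l r := by
  have h := partitionWeight_eq_shapeStirling (univ : Finset (Fin l)) r
  rwa [card_univ, Fintype.card_fin] at h

lemma sum_range_shapeStirling_mul_eq_one {c : ℝ} {a : ℕ → ℝ} (h0 : a 0 = 1)
    (hrec : ∀ n : ℕ, c * a (n + 1) + (n + 1) * a (n + 2) = a n) {l : ℕ} (hl : 1 ≤ l) :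
    ∑ i ∈ range l, shapeStirling l (i + 1) * (c ^ i * a (2 * l - i - 2)) = 1 := by
  induction l, hl using Nat.le_induction with
  | base => simp [shapeStirling, h0]
  | succ l hl ih =>
    have hterm (i : ℕ) (hi : i < l) :
        shapeStirling l (i + 1) * (c ^ (i + 1) * a (2 * l - (i + 1)))
          + (2 * l - (i + 1)) * shapeStirling l (i + 1) * (c ^ i * a (2 * l - i))
          = shapeStirling l (i + 1) * (c ^ i * a (2 * l - i - 2)) := by
      obtain ⟨n, hn⟩ := Nat.exists_eq_add_of_le (show i + 2 ≤ 2 * l by omega)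
      have hcoef : (2 * l - (i + 1) : ℝ) = n + 1 := by
        rw [← Nat.cast_ofNat, ← Nat.cast_mul, hn]; push_cast; ring
      rw [show 2 * l - i - 2 = n by omega, show 2 * l - (i + 1) = n + 1 by omega,
        show 2 * l - i = n + 2 by omega, hcoef, ← hrec n]
      ring
    calc ∑ i ∈ range (l + 1), shapeStirling (l + 1) (i + 1) * (c ^ i * a (2 * (l + 1) - i - 2))
        = ∑ i ∈ range (l + 1), shapeStirling l i * (c ^ i * a (2 * l - i))
          + ∑ i ∈ range (l + 1),
            (2 * l - (i + 1)) * shapeStirling l (i + 1) * (c ^ i * a (2 * l - i)) := by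
          rw [← sum_add_distrib]
          refine sum_congr rfl fun i _ => ?_
          rw [shapeStirling_succ_succ, show 2 * (l + 1) - i - 2 = 2 * l - i by omega]
          ring
      _ = ∑ i ∈ range l, shapeStirling l (i + 1) * (c ^ i * a (2 * l - i - 2)) := by
          have hl0 : shapeStirling l 0 = 0 := by
            obtain ⟨m, rfl⟩ := Nat.exists_eq_add_of_le' hl
            rfl
          rw [sum_range_succ', sum_range_succ _ l, hl0,
            shapeStirling_eq_zero_of_lt (lt_add_one l)]
          simp only [zero_mul, mul_zero, add_zero]
          rw [← sum_add_distrib]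
          exact sum_congr rfl fun i hi => hterm i (mem_range.1 hi)
      _ = 1 := ih

lemma sum_shapeStirling_mul_eq_one {c : ℝ} {a : ℕ → ℝ} (h0 : a 0 = 1)
    (hrec : ∀ n : ℕ, c * a (n + 1) + (n + 1) * a (n + 2) = a n) {l : ℕ} (hl : 1 ≤ l) :
    ∑ r ∈ Icc 1 l, shapeStirling l r * (c ^ (r - 1) * a (2 * l - r - 1)) = 1 := by
  rw [← Ico_add_one_right_eq_Icc, sum_Ico_eq_sum_range, Nat.add_sub_cancel]
  refine (sum_congr rfl fun i _ => ?_).trans (sum_range_shapeStirling_mul_eq_one h0 hrec hl)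
  rw [add_comm 1 i, Nat.add_sub_cancel, show 2 * l - (i + 1) - 1 = 2 * l - i - 2 by omega]

section TiltedGaussian

open Real Set Filter Topology Asymptotics

noncomputable def gaussMoment (c : ℝ) (n : ℕ) : ℝ :=
  ∫ σ in Ioi (0 : ℝ), σ ^ n * exp (-σ ^ 2 / 2 - c * σ)

noncomputable def gaussFluxMoment (c : ℝ) (n : ℕ) : ℝ :=
  ∫ σ in Ioi (0 : ℝ), (σ + c) * σ ^ n * exp (-σ ^ 2 / 2 - c * σ)

lemma tendsto_pow_mul_exp_neg_sq_div_two_sub (c : ℝ) (k : ℕ) :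
    Tendsto (fun σ : ℝ => σ ^ k * exp (-σ ^ 2 / 2 - c * σ)) atTop (𝓝 0) := by
  have hlim := (tendsto_pow_mul_exp_neg_atTop_nhds_zero k).const_mul (exp ((c - 1) ^ 2 / 2))
  rw [mul_zero] at hlim
  refine squeeze_zero' ?_ ?_ hlim
  · filter_upwards [eventually_ge_atTop 0] with σ hσ
    positivity
  · filter_upwards [eventually_ge_atTop 0] with σ hσ
    rw [mul_left_comm, ← exp_add]
    gcongr
    nlinarith [sq_nonneg (σ + c - 1)]

lemma integrableOn_pow_mul_exp_neg_sq_div_two_sub (c : ℝ) (k : ℕ) :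
    IntegrableOn (fun σ : ℝ => σ ^ k * exp (-σ ^ 2 / 2 - c * σ)) (Ioi 0) := by
  refine integrable_of_isBigO_exp_neg one_pos (by fun_prop) ?_
  have h := ((tendsto_pow_mul_exp_neg_sq_div_two_sub (c - 1) k).isBigO_one ℝ).mul
    (isBigO_refl (fun σ : ℝ => exp (-1 * σ)) atTop)
  refine (h.congr_left fun σ => ?_).trans (by simp only [one_mul]; exact isBigO_refl _ _)
  rw [mul_assoc, ← exp_add]
  ring_nf

lemma integrableOn_add_mul_pow_mul_exp (c : ℝ) (n : ℕ) :
    IntegrableOn (fun σ : ℝ => (σ + c) * σ ^ n * exp (-σ ^ 2 / 2 - c * σ)) (Ioi 0) :=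
  ((integrableOn_pow_mul_exp_neg_sq_div_two_sub c (n + 1)).add
    ((integrableOn_pow_mul_exp_neg_sq_div_two_sub c n).const_mul c)).congr_fun
    (fun σ _ => by simp only [Pi.add_apply]; ring) measurableSet_Ioi

lemma gaussFluxMoment_eq (c : ℝ) (n : ℕ) :
    gaussFluxMoment c n = gaussMoment c (n + 1) + c * gaussMoment c n := by
  rw [gaussFluxMoment, gaussMoment, gaussMoment, ← integral_const_mul, ← integral_add
    (integrableOn_pow_mul_exp_neg_sq_div_two_sub c (n + 1))
    ((integrableOn_pow_mul_exp_neg_sq_div_two_sub c n).const_mul c)]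
  congr 1 with σ
  ring

lemma hasDerivAt_exp_neg_sq_div_two_sub (c x : ℝ) :
    HasDerivAt (fun σ : ℝ => exp (-σ ^ 2 / 2 - c * σ))
      (-(x + c) * exp (-x ^ 2 / 2 - c * x)) x := by
  have h : HasDerivAt (fun σ : ℝ => -σ ^ 2 / 2 - c * σ) (-(x + c)) x :=
    (((hasDerivAt_pow 2 x).neg.div_const 2).sub ((hasDerivAt_id x).const_mul c)).congr_deriv
      (by simp; ring)
  exact h.exp.congr_deriv (mul_comm _ _)

lemma gaussFluxMoment_zero (c : ℝ) : gaussFluxMoment c 0 = 1 := by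
  have h := integral_Ioi_of_hasDerivAt_of_tendsto' (m := 0)
    (f := fun σ : ℝ => -exp (-σ ^ 2 / 2 - c * σ))
    (fun x _ => (hasDerivAt_exp_neg_sq_div_two_sub c x).neg.congr_deriv (by ring))
    (integrableOn_add_mul_pow_mul_exp c 0)
    (by simpa using (tendsto_pow_mul_exp_neg_sq_div_two_sub c 0).neg)
  rw [gaussFluxMoment]
  simpa using h

lemma gaussFluxMoment_succ (c : ℝ) (n : ℕ) :
    gaussFluxMoment c (n + 1) = (n + 1) * gaussMoment c n := by
  have hderiv (x : ℝ) : HasDerivAt (fun σ : ℝ => -(σ ^ (n + 1) * exp (-σ ^ 2 / 2 - c * σ)))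
      ((x + c) * x ^ (n + 1) * exp (-x ^ 2 / 2 - c * x)
        - (n + 1) * (x ^ n * exp (-x ^ 2 / 2 - c * x))) x :=
    ((hasDerivAt_pow (n + 1) x).mul (hasDerivAt_exp_neg_sq_div_two_sub c x)).neg.congr_deriv
      (by push_cast; ring)
  have h := integral_Ioi_of_hasDerivAt_of_tendsto' (fun x _ => hderiv x)
    ((integrableOn_add_mul_pow_mul_exp c (n + 1)).sub
      ((integrableOn_pow_mul_exp_neg_sq_div_two_sub c n).const_mul _))
    (by simpa using (tendsto_pow_mul_exp_neg_sq_div_two_sub c (n + 1)).neg)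
  rw [integral_sub (integrableOn_add_mul_pow_mul_exp c (n + 1))
    ((integrableOn_pow_mul_exp_neg_sq_div_two_sub c n).const_mul _), integral_const_mul] at h
  rw [gaussFluxMoment, gaussMoment, ← sub_eq_zero]
  simpa using h

noncomputable def normalizedFluxMoment (c : ℝ) (n : ℕ) : ℝ :=
  gaussFluxMoment c n / n.factorial

lemma normalizedFluxMoment_zero (c : ℝ) : normalizedFluxMoment c 0 = 1 := by
  simp [normalizedFluxMoment, gaussFluxMoment_zero]

lemma normalizedFluxMoment_succ (c : ℝ) (n : ℕ) :
    normalizedFluxMoment c (n + 1) = gaussMoment c n / n.factorial := by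
  rw [normalizedFluxMoment, gaussFluxMoment_succ, Nat.factorial_succ]
  push_cast
  rw [mul_div_mul_left _ _ (by positivity)]

lemma normalizedFluxMoment_recurrence (c : ℝ) (n : ℕ) :
    c * normalizedFluxMoment c (n + 1) + (n + 1) * normalizedFluxMoment c (n + 2)
      = normalizedFluxMoment c n := by
  rw [normalizedFluxMoment_succ, normalizedFluxMoment_succ, normalizedFluxMoment,
    gaussFluxMoment_eq, Nat.factorial_succ, Nat.cast_mul]
  field_simp
  push_cast
  ring

end TiltedGaussian

lemma I_eq_pow_mul_normalizedFluxMoment (l r : ℕ) (c : ℝ) :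
    I l r c = c ^ (r - 1) * normalizedFluxMoment c (2 * l - r - 1) := by
  rw [I, normalizedFluxMoment, gaussFluxMoment]
  ring

theorem stmt15_general (l : ℕ) (hl : 1 ≤ l) (c : ℝ) :
    ∑ r ∈ Finset.Icc 1 l, C l r * I l r c = 1 := by
  simp only [C_eq_shapeStirling, I_eq_pow_mul_normalizedFluxMoment]
  exact sum_shapeStirling_mul_eq_one (normalizedFluxMoment_zero c)
    (normalizedFluxMoment_recurrence c) hl

theorem stmt15 (l : ℕ) (hl : 1 ≤ l) (c : ℝ) (hc : 0 < c) :
    ∑ r ∈ Finset.Icc 1 l, C l r * I l r c = 1 :=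
  stmt15_general l hl c
end
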